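/- arXiv:2501.08796 — 4 statements merged into one kernel-verified Lean document; each statement's English description precedes it below -/
import Mathlib

section
/- Let 𝒞 be a regular orthogonal representation on E ∪ E*, let σ be an acyclic circuit signature of 𝒞, and let β be a map from bases to orientations compatible with σ. Then β is triangulating. -/
open scoped Classical

noncomputable section

namespace OMPaper

variable {E : Type*}

/-- The involution on the ground set `E ⊕ E` exchanging `e` (left) and `e*` (right). -/
def star : E ⊕ E → E ⊕ E := Sum.elim Sum.inr Sum.inl

/-- The support of a vector on the ground set. -/
def supp {R : Type*} [Zero R] (v : E ⊕ E → R) : Set (E ⊕ E) := {x | v x ≠ 0}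

/-- A subtransversal is a subset of `E ∪ E*` containing no skew pair `{e, e*}`. -/
def Subtransversal (S : Set (E ⊕ E)) : Prop := ∀ x ∈ S, star x ∉ S

/-- A transversal is a subtransversal of cardinality `|E|`. -/
def Transversal [Fintype E] (S : Set (E ⊕ E)) : Prop :=
  Subtransversal S ∧ S.ncard = Fintype.card E

/-- `π(v)(e) = v(e) + v(e*)` (integer valued). -/
def piZ (v : E ⊕ E → ℤ) : E → ℤ := fun e => v (Sum.inl e) + v (Sum.inr e)

/-- `π(v)(e) = v(e) + v(e*)` (rational valued). -/
def piQ (v : E ⊕ E → ℤ) : E → ℚ := fun e => (piZ v e : ℚ)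

/-- An oriented orthogonal matroid on `E ∪ E*`: a set of `{0, ±1}`-vectors (the signed
circuits) satisfying (O1), (O2) and (O3). -/
structure OrientedOM (E : Type*) [Fintype E] where
  circuits : Set (E ⊕ E → ℤ)
  mem_range : ∀ C ∈ circuits, ∀ x, C x = 0 ∨ C x = 1 ∨ C x = -1
  neg_mem : ∀ C ∈ circuits, -C ∈ circuits
  supp_nonempty : ∀ C ∈ circuits, (supp C).Nonempty
  supp_subtransversal : ∀ C ∈ circuits, Subtransversal (supp C)
  supp_minimal : ∀ C ∈ circuits, ∀ D ∈ circuits, supp C ⊆ supp D → supp C = supp D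
  elimination : ∀ C ∈ circuits, ∀ D ∈ circuits, ∀ e ∈ supp C ∩ supp D,
    Subtransversal (supp C ∪ supp D) →
    ∃ C' ∈ circuits, supp C' ⊆ (supp C ∪ supp D) \ {e}
  orth_card : ∀ C ∈ circuits, ∀ D ∈ circuits, (supp C ∩ star '' supp D).ncard ≠ 1
  extension : ∀ T : Set (E ⊕ E), Transversal T → ∀ x : E ⊕ E, star x ∈ T →
    ∃ C ∈ circuits, supp C ⊆ T ∪ {x}
  pairing : ∀ C ∈ circuits, ∀ D ∈ circuits,
    (∀ x, C x * D (star x) = 0) ∨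
    ((∃ x, C x * D (star x) = 1) ∧ (∃ y, C y * D (star y) = -1))

/-- A regular orthogonal representation: an oriented orthogonal matroid satisfying (O3'). -/
structure RegularRep (E : Type*) [Fintype E] extends OrientedOM E where
  orthogonal : ∀ C ∈ circuits, ∀ D ∈ circuits, ∑ x : E ⊕ E, C x * D (star x) = 0

/-- A basis of the underlying orthogonal matroid: a transversal containing no circuit. -/
def IsBasis [Fintype E] (M : OrientedOM E) (B : Set (E ⊕ E)) : Prop :=
  Transversal B ∧ ∀ C ∈ M.circuits, ¬ supp C ⊆ B

/-- An orientation: a function `E → ℚ` with values in `{1/2, -1/2}`. -/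
def IsOrientation (O : E → ℚ) : Prop := ∀ e, O e = 1/2 ∨ O e = -1/2

/-- Circuit-reversal equivalence of two functions `E → ℚ`:
`O' = O + π(C₁) + ⋯ + π(C_m)` with every partial sum an orientation. -/
def RevEquiv [Fintype E] (M : OrientedOM E) (O O' : E → ℚ) : Prop :=
  ∃ (m : ℕ) (C : ℕ → E ⊕ E → ℤ),
    (∀ k < m, C k ∈ M.circuits) ∧
    (∀ j ≤ m, IsOrientation (O + ∑ k ∈ Finset.range j, piQ (C k))) ∧
    O' = O + ∑ k ∈ Finset.range m, piQ (C k)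

/-- The unique element of `E ∩ {x, x*}`. -/
def underline : E ⊕ E → E := Sum.elim id id

/-- A signed circuit `C` is contained in a fourientation `F` if `C(x) ∈ F(x)` for every
`x` in the support of `C`. -/
def ContainedIn (C : E ⊕ E → ℤ) (F : E ⊕ E → Set ℤ) : Prop :=
  ∀ x, C x ≠ 0 → C x ∈ F x

/-- The negative of a fourientation. -/
def negF (F : E ⊕ E → Set ℤ) : E ⊕ E → Set ℤ := fun x => {s | -s ∈ F x}

/-- The fourientation `F(B, O)`: bi-orient the elements of `B`, and orient `x ∉ B`
according to `2·O(x̲)`. -/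
def FBO (B : Set (E ⊕ E)) (O : E → ℚ) : E ⊕ E → Set ℤ :=
  fun x => if x ∈ B then {1, -1} else {s : ℤ | (s : ℚ) = 2 * O (underline x)}

/-- A map from bases to orientations is triangulating if for all bases `B₁, B₂`, no
signed circuit is contained in `F(B₁, β(B₁)) ∩ (−F(B₂, β(B₂)))`. -/
def Triangulating [Fintype E] (M : OrientedOM E) (β : Set (E ⊕ E) → E → ℚ) : Prop :=
  ∀ B₁ B₂ : Set (E ⊕ E), IsBasis M B₁ → IsBasis M B₂ →
    ∀ C ∈ M.circuits,
      ¬ ContainedIn C (fun x => FBO B₁ (β B₁) x ∩ negF (FBO B₂ (β B₂)) x)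

/-- A circuit signature: a subset of the signed circuits containing exactly one of
`C` and `-C` for each signed circuit `C`. -/
def IsSignature [Fintype E] (M : OrientedOM E) (σ : Set (E ⊕ E → ℤ)) : Prop :=
  σ ⊆ M.circuits ∧ ∀ C ∈ M.circuits, Xor' (C ∈ σ) (-C ∈ σ)

/-- A signature is acyclic if every vanishing nonnegative rational linear combination of
its elements has all coefficients zero. -/
def AcyclicSig (σ : Set (E ⊕ E → ℤ)) : Prop :=
  ∀ (s : Finset (E ⊕ E → ℤ)) (a : (E ⊕ E → ℤ) → ℚ),
    ↑s ⊆ σ → (∀ C ∈ s, 0 ≤ a C) →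
    (∀ x, (∑ C ∈ s, a C * (C x : ℚ)) = 0) → ∀ C ∈ s, a C = 0

/-- `β` is compatible with the signature `σ`: for every basis `B` and `e ∈ E`, letting
`e'` be the unique element of `{e, e*}` not in `B`, there is `C ∈ σ` with
`supp C = FC(B, e')` and `C(e') = 2·β(B)(e)`. -/
def CompatibleMap [Fintype E] (M : OrientedOM E) (σ : Set (E ⊕ E → ℤ))
    (β : Set (E ⊕ E) → E → ℚ) : Prop :=
  ∀ B : Set (E ⊕ E), IsBasis M B → ∀ e : E, ∀ e' : E ⊕ E,
    (e' = Sum.inl e ∨ e' = Sum.inr e) → e' ∉ B →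
    ∃ C ∈ σ, supp C ⊆ insert e' (B \ {star e'}) ∧ e' ∈ supp C ∧
      ((C e' : ℤ) : ℚ) = 2 * β B e

/-- A lift of an orientation `O`: a vector `v : E ∪ E* → ℚ` whose support is a
transversal, with `π(v) = O`, such that every element of the support of `v` lies in the
support of a signed circuit `C` with `C = 2·v` on its support. -/
def IsLift [Fintype E] (M : OrientedOM E) (O : E → ℚ) (v : E ⊕ E → ℚ) : Prop :=
  Transversal (supp v) ∧ (∀ e, v (Sum.inl e) + v (Sum.inr e) = O e) ∧
  ∀ x ∈ supp v, ∃ C ∈ M.circuits, x ∈ supp C ∧ ∀ y ∈ supp C, ((C y : ℤ) : ℚ) = 2 * v y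


lemma star_star (x : E ⊕ E) : star (star x) = x := by cases x <;> rfl

lemma star_inj {x y : E ⊕ E} (h : star x = star y) : x = y := by
  have := congrArg star h; simpa [star_star] using this

lemma underline_eq_of_eq {x : E ⊕ E} {e : E}
    (h : x = Sum.inl e ∨ x = Sum.inr e) : underline x = e := by
  rcases h with h | h <;> simp [h, underline]

/-- A transversal meets each pair `{e, e*}`. -/
lemma transversal_covers [Fintype E] {B : Set (E ⊕ E)} (hB : Transversal B) (e : E) :
    Sum.inl e ∈ B ∨ Sum.inr e ∈ B := by
  classical
  have hinj : Set.InjOn (underline : E ⊕ E → E) B := by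
    intro x hx y hy hxy
    by_contra hne
    have hys : y = star x := by
      cases x with
      | inl a => cases y with
        | inl b => simp [underline] at hxy; exact absurd (by rw [hxy]) hne
        | inr b => simp [underline] at hxy; simp [star, hxy]
      | inr a => cases y with
        | inl b => simp [underline] at hxy; simp [star, hxy]
        | inr b => simp [underline] at hxy; exact absurd (by rw [hxy]) hne
    exact hB.1 x hx (hys ▸ hy)
  have himg : underline '' B = Set.univ := by
    apply Set.eq_of_subset_of_ncard_le (Set.subset_univ _) _ Set.finite_univ
    rw [Set.ncard_univ, Set.ncard_image_of_injOn hinj, hB.2, Nat.card_eq_fintype_card]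
  have he : e ∈ underline '' B := himg ▸ Set.mem_univ e
  obtain ⟨x, hx, hxe⟩ := he
  cases x with
  | inl a => left; have h : a = e := hxe; subst h; exact hx
  | inr a => right; have h : a = e := hxe; subst h; exact hx

/-- Decomposition of a circuit "contained" in `F(B, O)` into fundamental circuits. -/
lemma decomp [Fintype E] (M : RegularRep E) {B : Set (E ⊕ E)}
    (hB : IsBasis M.toOrientedOM B)
    (e' : E → E ⊕ E) (C : E → E ⊕ E → ℤ)
    (he'1 : ∀ e, e' e = Sum.inl e ∨ e' e = Sum.inr e)
    (he'B : ∀ e, e' e ∉ B)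
    (he'x : ∀ x, x ∉ B → e' (underline x) = x)
    (hC : ∀ e, C e ∈ M.circuits)
    (hCsupp : ∀ e, supp (C e) ⊆ insert (e' e) (B \ {star (e' e)}))
    (hCe' : ∀ e, e' e ∈ supp (C e))
    (D : E ⊕ E → ℤ) (hD : D ∈ M.circuits)
    (hval : ∀ x, x ∉ B → D x ≠ 0 → D x = C (underline x) x) :
    ∀ x, D x = ∑ e ∈ Finset.univ.filter (fun e => D (e' e) ≠ 0), C e x := by
  classical
  set S := Finset.univ.filter (fun e => D (e' e) ≠ 0) with hS
  set w : E ⊕ E → ℤ := fun x => D x - ∑ e ∈ S, C e x with hw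
  have hue : ∀ e, underline (e' e) = e := fun e => underline_eq_of_eq (he'1 e)
  -- Step 1: w vanishes off B
  have hwB : ∀ x, x ∉ B → w x = 0 := by
    intro x hx
    have key : ∀ e, e ≠ underline x → C e x = 0 := by
      intro e hne
      by_contra h
      rcases Set.mem_insert_iff.mp (hCsupp e h) with h1 | h2
      · exact hne (by rw [← hue e, h1])
      · exact hx h2.1
    by_cases hDx : D x = 0
    · have hnotS : ∀ e ∈ S, C e x = 0 := by
        intro e he
        rcases eq_or_ne e (underline x) with rfl | hne
        · exfalso
          rw [hS, Finset.mem_filter] at he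
          exact he.2 (by rw [he'x x hx]; exact hDx)
        · exact key e hne
      simp only [hw, hDx, Finset.sum_eq_zero hnotS, sub_zero]
    · have hmem : underline x ∈ S := by
        rw [hS, Finset.mem_filter]
        exact ⟨Finset.mem_univ _, by rw [he'x x hx]; exact hDx⟩
      have hsum : ∑ e ∈ S, C e x = C (underline x) x :=
        Finset.sum_eq_single_of_mem _ hmem (fun e _ hne => key e hne)
      simp only [hw, hsum]
      rw [← hval x hx hDx, sub_self]
  -- Step 2: w is orthogonal to all circuits
  have horth : ∀ C₀ ∈ M.circuits, ∑ x : E ⊕ E, w x * C₀ (star x) = 0 := by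
    intro C₀ hC₀
    have h1 : ∑ x : E ⊕ E, D x * C₀ (star x) = 0 := M.orthogonal D hD C₀ hC₀
    have h2 : ∀ e, ∑ x : E ⊕ E, C e x * C₀ (star x) = 0 :=
      fun e => M.orthogonal (C e) (hC e) C₀ hC₀
    calc ∑ x : E ⊕ E, w x * C₀ (star x)
        = ∑ x : E ⊕ E, (D x * C₀ (star x) - ∑ e ∈ S, C e x * C₀ (star x)) := by
          apply Finset.sum_congr rfl
          intro x _
          simp only [hw, sub_mul, Finset.sum_mul]
      _ = 0 := by
          rw [Finset.sum_sub_distrib, h1, Finset.sum_comm]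
          simp [h2]
  -- Step 3: w = 0
  have hw0 : ∀ x, w x = 0 := by
    intro x
    by_contra hx
    have hxB : x ∈ B := by by_contra h; exact hx (hwB x h)
    have hstar : e' (underline x) = star x := by
      cases x with
      | inl a =>
        rcases he'1 a with h | h
        · exact absurd hxB (show Sum.inl a ∉ B from h ▸ he'B a)
        · simpa [underline, star] using h
      | inr a =>
        rcases he'1 a with h | h
        · simpa [underline, star] using h
        · exact absurd hxB (show Sum.inr a ∉ B from h ▸ he'B a)
    have h0 := horth (C (underline x)) (hC _)
    have hsum : ∑ y : E ⊕ E, w y * C (underline x) (star y)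
        = w x * C (underline x) (star x) := by
      apply Finset.sum_eq_single_of_mem x (Finset.mem_univ x)
      intro y _ hy
      by_cases hwy : w y = 0
      · simp [hwy]
      · have hyB : y ∈ B := by by_contra h; exact hwy (hwB y h)
        have hC0 : C (underline x) (star y) = 0 := by
          by_contra h
          rcases Set.mem_insert_iff.mp (hCsupp (underline x) h) with h1 | h2
          · rw [hstar] at h1
            exact hy (star_inj h1)
          · exact (hB.1.1 y hyB) h2.1
        simp [hC0]
    rw [hsum] at h0
    have hCne : C (underline x) (star x) ≠ 0 := by
      rw [← hstar]; exact hCe' (underline x)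
    rcases mul_eq_zero.mp h0 with h | h
    · exact hx h
    · exact hCne h
  intro x
  have := hw0 x
  simp only [hw] at this
  linarith [this]

/-- Lemma 4.18: if `σ` is an acyclic circuit signature and `β` is compatible with `σ`,
then `β` is triangulating. -/
theorem statement12 {E : Type*} [Fintype E] (M : RegularRep E)
    (σ : Set (E ⊕ E → ℤ)) (hsig : IsSignature M.toOrientedOM σ) (hacy : AcyclicSig σ)
    (β : Set (E ⊕ E) → E → ℚ)
    (hor : ∀ B, IsBasis M.toOrientedOM B → IsOrientation (β B))
    (hcomp : CompatibleMap M.toOrientedOM σ β) :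
    Triangulating M.toOrientedOM β := by
  classical
  intro B₁ B₂ hB₁ hB₂ D hD hcont
  -- Build, for a basis B, the family of σ-compatible fundamental circuits.
  have build : ∀ (B : Set (E ⊕ E)), IsBasis M.toOrientedOM B →
      ∃ (e' : E → E ⊕ E) (C : E → E ⊕ E → ℤ),
        (∀ e, e' e = Sum.inl e ∨ e' e = Sum.inr e) ∧
        (∀ e, e' e ∉ B) ∧
        (∀ x, x ∉ B → e' (underline x) = x) ∧
        (∀ e, C e ∈ σ) ∧
        (∀ e, supp (C e) ⊆ insert (e' e) (B \ {star (e' e)})) ∧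
        (∀ e, e' e ∈ supp (C e)) ∧
        (∀ e, ((C e (e' e) : ℤ) : ℚ) = 2 * β B e) := by
    intro B hB
    refine ⟨fun e => if Sum.inl e ∈ B then Sum.inr e else Sum.inl e, ?_⟩
    have h1 : ∀ e, (if Sum.inl e ∈ B then Sum.inr e else Sum.inl e) = Sum.inl e ∨
        (if Sum.inl e ∈ B then Sum.inr e else Sum.inl e) = Sum.inr e := by
      intro e; by_cases h : Sum.inl e ∈ B <;> simp [h]
    have h2 : ∀ e, (if Sum.inl e ∈ B then Sum.inr e else Sum.inl e) ∉ B := by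
      intro e; by_cases h : Sum.inl e ∈ B
      · have := hB.1.1 _ h
        simpa [h, star] using this
      · simpa [h] using h
    have h3 : ∀ x, x ∉ B →
        (if Sum.inl (underline x) ∈ B then Sum.inr (underline x) else Sum.inl (underline x)) = x := by
      intro x hx
      cases x with
      | inl a => simp [underline, hx]
      | inr a =>
        have : Sum.inl a ∈ B := (transversal_covers hB.1 a).resolve_right hx
        simp [underline, this]
    choose Cf hCσ hCs hCm hCv using fun e =>
      hcomp B hB e (if Sum.inl e ∈ B then Sum.inr e else Sum.inl e) (h1 e) (h2 e)
    exact ⟨Cf, h1, h2, h3, hCσ, hCs, hCm, hCv⟩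
  obtain ⟨e1, C1, h1a, h1b, h1c, h1σ, h1s, h1m, h1v⟩ := build B₁ hB₁
  obtain ⟨e2, C2, h2a, h2b, h2c, h2σ, h2s, h2m, h2v⟩ := build B₂ hB₂
  have hD' : -D ∈ M.circuits := M.neg_mem D hD
  -- value conditions from containment
  have hval1 : ∀ x, x ∉ B₁ → D x ≠ 0 → D x = C1 (underline x) x := by
    intro x hx hDx
    have hm := (hcont x hDx).1
    simp only [FBO, if_neg hx, Set.mem_setOf_eq] at hm
    have hcq := h1v (underline x)
    rw [h1c x hx] at hcq
    have : ((D x : ℤ) : ℚ) = ((C1 (underline x) x : ℤ) : ℚ) := by rw [hm, ← hcq]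
    exact_mod_cast this
  have hval2 : ∀ x, x ∉ B₂ → (-D) x ≠ 0 → (-D) x = C2 (underline x) x := by
    intro x hx hDx
    have hDx0 : D x ≠ 0 := by simpa using hDx
    have hm := (hcont x hDx0).2
    simp only [negF, FBO, if_neg hx, Set.mem_setOf_eq] at hm
    have hcq := h2v (underline x)
    rw [h2c x hx] at hcq
    have h := hm.trans hcq.symm
    show -D x = C2 (underline x) x
    exact_mod_cast h
  have hdec1 := decomp M hB₁ e1 C1 h1a h1b h1c (fun e => hsig.1 (h1σ e)) h1s h1m D hD hval1
  have hdec2 := decomp M hB₂ e2 C2 h2a h2b h2c (fun e => hsig.1 (h2σ e)) h2s h2m (-D) hD' hval2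
  set S₁ := Finset.univ.filter (fun e => D (e1 e) ≠ 0) with hS₁
  set S₂ := Finset.univ.filter (fun e => (-D) (e2 e) ≠ 0) with hS₂
  set s : Finset (E ⊕ E → ℤ) := S₁.image C1 ∪ S₂.image C2 with hs
  set a : (E ⊕ E → ℤ) → ℚ := fun C =>
    ((S₁.filter (fun e => C1 e = C)).card : ℚ) +
    ((S₂.filter (fun e => C2 e = C)).card : ℚ) with ha
  have hsub : ↑s ⊆ σ := by
    intro C hC
    rw [Finset.mem_coe, hs, Finset.mem_union] at hC
    rcases hC with hC | hC
    · obtain ⟨e, _, rfl⟩ := Finset.mem_image.mp hC; exact h1σ e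
    · obtain ⟨e, _, rfl⟩ := Finset.mem_image.mp hC; exact h2σ e
  have hnn : ∀ C ∈ s, 0 ≤ a C := by
    intro C _; rw [ha]; exact add_nonneg (Nat.cast_nonneg _) (Nat.cast_nonneg _)
  have fib : ∀ (T : Finset E) (Cf : E → E ⊕ E → ℤ), (∀ e ∈ T, Cf e ∈ s) → ∀ x,
      ∑ C ∈ s, ((T.filter (fun e => Cf e = C)).card : ℚ) * (C x : ℚ)
        = ∑ e ∈ T, (Cf e x : ℚ) := by
    intro T Cf hmaps x
    rw [← Finset.sum_fiberwise_of_maps_to hmaps (fun e => ((Cf e x : ℤ) : ℚ))]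
    apply Finset.sum_congr rfl
    intro C _
    have hcongr : ∀ e ∈ T.filter (fun e => Cf e = C), ((Cf e x : ℤ) : ℚ) = ((C x : ℤ) : ℚ) := by
      intro e he
      rw [(Finset.mem_filter.mp he).2]
    rw [Finset.sum_congr rfl hcongr, Finset.sum_const, nsmul_eq_mul]
  have hmaps1 : ∀ e ∈ S₁, C1 e ∈ s := by
    intro e he; rw [hs, Finset.mem_union]; exact Or.inl (Finset.mem_image_of_mem _ he)
  have hmaps2 : ∀ e ∈ S₂, C2 e ∈ s := by
    intro e he; rw [hs, Finset.mem_union]; exact Or.inr (Finset.mem_image_of_mem _ he)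
  have hzero : ∀ x, (∑ C ∈ s, a C * (C x : ℚ)) = 0 := by
    intro x
    have hsplit : ∑ C ∈ s, a C * (C x : ℚ)
        = (∑ C ∈ s, ((S₁.filter (fun e => C1 e = C)).card : ℚ) * (C x : ℚ))
        + (∑ C ∈ s, ((S₂.filter (fun e => C2 e = C)).card : ℚ) * (C x : ℚ)) := by
      rw [← Finset.sum_add_distrib]
      apply Finset.sum_congr rfl
      intro C _
      rw [ha, add_mul]
    rw [hsplit, fib S₁ C1 hmaps1 x, fib S₂ C2 hmaps2 x]
    have e1q : ∑ e ∈ S₁, (C1 e x : ℚ) = (D x : ℚ) := by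
      rw [hdec1 x]; push_cast; rfl
    have e2q : ∑ e ∈ S₂, (C2 e x : ℚ) = ((-D) x : ℚ) := by
      rw [hdec2 x]; push_cast; rfl
    rw [e1q, e2q]
    simp
  have hall := hacy s a hsub hnn hzero
  obtain ⟨x₀, hx₀D, hx₀B⟩ : ∃ x, D x ≠ 0 ∧ x ∉ B₁ := by
    obtain ⟨x, hx1, hx2⟩ := Set.not_subset.mp (hB₁.2 D hD)
    exact ⟨x, hx1, hx2⟩
  have hmemS₁ : underline x₀ ∈ S₁ := by
    rw [hS₁, Finset.mem_filter]
    exact ⟨Finset.mem_univ _, by rw [h1c x₀ hx₀B]; exact hx₀D⟩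
  have hCs' : C1 (underline x₀) ∈ s := hmaps1 _ hmemS₁
  have hz := hall _ hCs'
  have hmemf : underline x₀ ∈ S₁.filter (fun e => C1 e = C1 (underline x₀)) :=
    Finset.mem_filter.mpr ⟨hmemS₁, rfl⟩
  have hcard : 0 < (S₁.filter (fun e => C1 e = C1 (underline x₀))).card :=
    Finset.card_pos.mpr ⟨_, hmemf⟩
  have hpos : (0 : ℚ) < a (C1 (underline x₀)) := by
    simp only [ha]
    have h1 : (0 : ℚ) < ((S₁.filter (fun e => C1 e = C1 (underline x₀))).card : ℚ) := by
      exact_mod_cast hcard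
    have h2 : (0 : ℚ) ≤ ((S₂.filter (fun e => C2 e = C1 (underline x₀))).card : ℚ) := by
      exact Nat.cast_nonneg _
    linarith
  rw [hz] at hpos
  exact lt_irrefl 0 hpos

end OMPaper
end
end

section
/- Let 𝒞 be a regular orthogonal representation on E ∪ E*, let O₁ and O₂ be orientations with lifts v₁ and v₂ respectively, and let C ∈ 𝒞 be a signed circuit. Then O₂ = O₁ + π(C) if and only if v₂ = v₁ + C. Moreover, if these equalities hold, then supp(C) ⊆ supp(v₁) = supp(v₂). -/
open scoped Classical

noncomputable section

namespace OMPaper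

variable {E : Type*}

lemma underline_star (x : E ⊕ E) : underline (star x) = underline x := by cases x <;> rfl

lemma sub_zero {R : Type*} [Zero R] {v : E ⊕ E → R} (h : Subtransversal (supp v))
    {x : E ⊕ E} (hx : v x ≠ 0) : v (star x) = 0 :=
  not_not.mp (h x hx)

lemma pair_sum {v : E ⊕ E → ℚ} {O : E → ℚ}
    (h : ∀ e, v (Sum.inl e) + v (Sum.inr e) = O e) (x : E ⊕ E) :
    v x + v (star x) = O (underline x) := by
  cases x with
  | inl e => exact h e
  | inr e => rw [add_comm]; exact h e

lemma piQ_pair (C : E ⊕ E → ℤ) (x : E ⊕ E) :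
    piQ C (underline x) = (C x : ℚ) + (C (star x) : ℚ) := by
  cases x <;> simp [piQ, piZ, star, underline] <;> push_cast <;> ring

lemma lift_pair_ne {O : E → ℚ} (hO : IsOrientation O) {v : E ⊕ E → ℚ}
    (hsum : ∀ e, v (Sum.inl e) + v (Sum.inr e) = O e)
    {x : E ⊕ E} (h : v (star x) = 0) : v x ≠ 0 := by
  have hp := pair_sum hsum x
  rw [h, add_zero] at hp
  rcases hO (underline x) with h' | h' <;> rw [hp, h'] <;> norm_num

lemma pin {a b c : ℚ} (ha : a = 1/2 ∨ a = -1/2) (hb : b = 1/2 ∨ b = -1/2)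
    (hc : c = 1 ∨ c = -1) (h : b = a + c) : a = -c/2 ∧ b = c/2 := by
  rcases ha with ha | ha <;> rcases hb with hb | hb <;> rcases hc with hc | hc <;>
    subst ha <;> subst hc <;> rw [hb] at h ⊢ <;> revert h <;> norm_num

/-- Step A: if `O₁ = -C/2` on the support pairs of `C`, then `v₁` vanishes on the
star of the support of `C`. -/
lemma stepA {E : Type*} [Fintype E] (M : RegularRep E) {O₁ : E → ℚ}
    {v₁ : E ⊕ E → ℚ} (hv₁ : IsLift M.toOrientedOM O₁ v₁)
    {C : E ⊕ E → ℤ} (hC : C ∈ M.circuits)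
    (hO : ∀ x : E ⊕ E, C x ≠ 0 → O₁ (underline x) = -(C x : ℚ)/2) :
    ∀ z : E ⊕ E, C z ≠ 0 → v₁ (star z) = 0 := by
  intro z hz
  by_contra hne
  obtain ⟨D, hD, hzD, hDv⟩ := hv₁.2.2 (star z) hne
  have hsum : ∑ x : E ⊕ E, (C x : ℚ) * (D (star x) : ℚ) = 0 := by
    have h0 : ((∑ x : E ⊕ E, C x * D (star x) : ℤ) : ℚ) = 0 := by
      rw [M.orthogonal C hC D hD]; norm_num
    push_cast at h0
    exact h0
  have hterm : ∀ x : E ⊕ E, (C x : ℚ) * (D (star x) : ℚ) ≤ 0 := by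
    intro x
    by_cases hCx : C x = 0
    · simp [hCx]
    by_cases hDx : D (star x) = 0
    · simp [hDx]
    have hDeq : ((D (star x) : ℤ) : ℚ) = 2 * v₁ (star x) := hDv (star x) hDx
    have hvne : v₁ (star x) ≠ 0 := by
      intro h
      rw [h] at hDeq
      have h0 : ((D (star x) : ℤ) : ℚ) = 0 := by rw [hDeq]; ring
      exact hDx (by exact_mod_cast h0)
    have hvx : v₁ (star (star x)) = 0 := sub_zero hv₁.1.1 hvne
    have hval : v₁ (star x) = O₁ (underline x) := by
      have hp := pair_sum hv₁.2.1 (star x)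
      rw [hvx, add_zero, underline_star] at hp
      exact hp
    rw [hDeq, hval, hO x hCx]
    have hc2 : (C x : ℚ) * (C x : ℚ) = 1 := by
      rcases M.mem_range C hC x with h | h | h
      · exact absurd h hCx
      · rw [h]; norm_num
      · rw [h]; norm_num
    nlinarith [hc2]
  have hall := (Finset.sum_eq_zero_iff_of_nonpos (fun x _ => hterm x)).mp hsum
  have hzterm := hall z (Finset.mem_univ z)
  have hDz : D (star z) ≠ 0 := hzD
  exact (mul_ne_zero (Int.cast_ne_zero.mpr hz) (Int.cast_ne_zero.mpr hDz)) hzterm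

/-- Step B: under the step A conclusions for both lifts, the supports of `v₁` and `v₂`
agree pairwise. -/
lemma stepB {E : Type*} [Fintype E] (M : RegularRep E) {O₁ O₂ : E → ℚ}
    {v₁ v₂ : E ⊕ E → ℚ}
    (hv₁ : IsLift M.toOrientedOM O₁ v₁) (hv₂ : IsLift M.toOrientedOM O₂ v₂)
    {C : E ⊕ E → ℤ}
    (hA₁ : ∀ z : E ⊕ E, C z ≠ 0 → v₁ (star z) = 0)
    (hA₂ : ∀ z : E ⊕ E, C z ≠ 0 → v₂ (star z) = 0)
    (hOe : ∀ x : E ⊕ E, C x = 0 → C (star x) = 0 → O₂ (underline x) = O₁ (underline x)) :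
    ∀ x : E ⊕ E, v₁ x ≠ 0 → v₂ (star x) = 0 := by
  intro x hx
  by_contra hne
  obtain ⟨D₁, hD₁, hxD₁, hD₁v⟩ := hv₁.2.2 x hx
  obtain ⟨D₂, hD₂, hxD₂, hD₂v⟩ := hv₂.2.2 (star x) hne
  have hsum : ∑ y : E ⊕ E, (D₁ y : ℚ) * (D₂ (star y) : ℚ) = 0 := by
    have h0 : ((∑ y : E ⊕ E, D₁ y * D₂ (star y) : ℤ) : ℚ) = 0 := by
      rw [M.orthogonal D₁ hD₁ D₂ hD₂]; norm_num
    push_cast at h0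
    exact h0
  have hterm : ∀ y : E ⊕ E, 0 ≤ (D₁ y : ℚ) * (D₂ (star y) : ℚ) := by
    intro y
    by_cases hy1 : D₁ y = 0
    · simp [hy1]
    by_cases hy2 : D₂ (star y) = 0
    · simp [hy2]
    have he1 : ((D₁ y : ℤ) : ℚ) = 2 * v₁ y := hD₁v y hy1
    have he2 : ((D₂ (star y) : ℤ) : ℚ) = 2 * v₂ (star y) := hD₂v (star y) hy2
    have hv1y : v₁ y ≠ 0 := by
      intro h; rw [h] at he1
      have h0 : ((D₁ y : ℤ) : ℚ) = 0 := by rw [he1]; ring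
      exact hy1 (by exact_mod_cast h0)
    have hv2y : v₂ (star y) ≠ 0 := by
      intro h; rw [h] at he2
      have h0 : ((D₂ (star y) : ℤ) : ℚ) = 0 := by rw [he2]; ring
      exact hy2 (by exact_mod_cast h0)
    have hCy : C y = 0 := by
      by_contra h
      exact hv2y (hA₂ y h)
    have hCsy : C (star y) = 0 := by
      by_contra h
      have := hA₁ (star y) h
      rw [star_star] at this
      exact hv1y this
    -- v₁ y = O₁ u and v₂ (star y) = O₂ u = O₁ u
    have hval1 : v₁ y = O₁ (underline y) := by
      have hp := pair_sum hv₁.2.1 y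
      rw [sub_zero hv₁.1.1 hv1y, add_zero] at hp
      exact hp
    have hval2 : v₂ (star y) = O₂ (underline y) := by
      have hp := pair_sum hv₂.2.1 (star y)
      have h0 : v₂ (star (star y)) = 0 := sub_zero hv₂.1.1 hv2y
      rw [h0, add_zero, underline_star] at hp
      exact hp
    rw [he1, he2, hval1, hval2, hOe y hCy hCsy]
    nlinarith [mul_self_nonneg (O₁ (underline y))]
  have hall := (Finset.sum_eq_zero_iff_of_nonneg (fun y _ => hterm y)).mp hsum
  have hxterm := hall x (Finset.mem_univ x)
  have hx1 : D₁ x ≠ 0 := hxD₁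
  have hx2 : D₂ (star x) ≠ 0 := hxD₂
  exact (mul_ne_zero (Int.cast_ne_zero.mpr hx1) (Int.cast_ne_zero.mpr hx2)) hxterm


/-- Proposition 3.25: for orientations `O₁, O₂` with lifts `v₁, v₂` and a signed circuit
`C`, one has `O₂ = O₁ + π(C)` iff `v₂ = v₁ + C`; moreover, if these hold then
`supp C ⊆ supp v₁ = supp v₂`. -/
theorem statement16 {E : Type*} [Fintype E] (M : RegularRep E)
    (O₁ O₂ : E → ℚ) (h₁ : IsOrientation O₁) (h₂ : IsOrientation O₂)
    (v₁ v₂ : E ⊕ E → ℚ)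
    (hv₁ : IsLift M.toOrientedOM O₁ v₁) (hv₂ : IsLift M.toOrientedOM O₂ v₂)
    (C : E ⊕ E → ℤ) (hC : C ∈ M.circuits) :
    (O₂ = O₁ + piQ C ↔ v₂ = v₁ + fun x => ((C x : ℤ) : ℚ)) ∧
    (O₂ = O₁ + piQ C → supp C ⊆ supp v₁ ∧ supp v₁ = supp v₂) := by
  have hsubC : Subtransversal (supp C) := M.supp_subtransversal C hC
  have hCz : ∀ x : E ⊕ E, C x ≠ 0 → C (star x) = 0 := fun x hx => sub_zero hsubC hx
  -- everything we need in the forward direction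
  have key : O₂ = O₁ + piQ C →
      (v₂ = v₁ + fun x => ((C x : ℤ) : ℚ)) ∧ supp C ⊆ supp v₁ ∧ supp v₁ = supp v₂ := by
    intro hO
    have hpin : ∀ x : E ⊕ E, C x ≠ 0 →
        O₁ (underline x) = -(C x : ℚ)/2 ∧ O₂ (underline x) = (C x : ℚ)/2 := by
      intro x hx
      have hO' : O₂ (underline x) = O₁ (underline x) + (C x : ℚ) := by
        have := congrFun hO (underline x)
        rw [Pi.add_apply, piQ_pair C x, hCz x hx] at this
        simpa using this
      have hc : (C x : ℚ) = 1 ∨ (C x : ℚ) = -1 := by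
        rcases M.mem_range C hC x with h | h | h
        · exact absurd h hx
        · left; exact_mod_cast h
        · right; rw [h]; norm_num
      exact pin (h₁ (underline x)) (h₂ (underline x)) hc hO'
    have hA₁ : ∀ z : E ⊕ E, C z ≠ 0 → v₁ (star z) = 0 :=
      stepA M hv₁ hC (fun x hx => (hpin x hx).1)
    have hA₂ : ∀ z : E ⊕ E, C z ≠ 0 → v₂ (star z) = 0 := by
      have hneg : (-C) ∈ M.circuits := M.neg_mem C hC
      have := stepA M hv₂ hneg (C := -C) (fun x hx => by
        have hx' : C x ≠ 0 := fun h => hx (by simp [h])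
        rw [(hpin x hx').2]
        simp only [Pi.neg_apply]
        push_cast
        ring)
      intro z hz
      exact this z (by simpa using hz)
    have hOe : ∀ x : E ⊕ E, C x = 0 → C (star x) = 0 →
        O₂ (underline x) = O₁ (underline x) := by
      intro x h1 h2
      have := congrFun hO (underline x)
      rw [Pi.add_apply, piQ_pair C x, h1, h2] at this
      simpa using this
    have hB₁ : ∀ x : E ⊕ E, v₁ x ≠ 0 → v₂ (star x) = 0 :=
      stepB M hv₁ hv₂ hA₁ hA₂ hOe
    have hB₂ : ∀ x : E ⊕ E, v₂ x ≠ 0 → v₁ (star x) = 0 :=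
      stepB M hv₂ hv₁ hA₂ hA₁ (fun x h1 h2 => (hOe x h1 h2).symm)
    have hval₁ : ∀ x : E ⊕ E, C x ≠ 0 → v₁ x = -(C x : ℚ)/2 := by
      intro x hx
      have hp := pair_sum hv₁.2.1 x
      rw [hA₁ x hx, add_zero] at hp
      rw [hp]; exact (hpin x hx).1
    have hval₂ : ∀ x : E ⊕ E, C x ≠ 0 → v₂ x = (C x : ℚ)/2 := by
      intro x hx
      have hp := pair_sum hv₂.2.1 x
      rw [hA₂ x hx, add_zero] at hp
      rw [hp]; exact (hpin x hx).2
    refine ⟨funext fun x => ?_, fun x hx => ?_, Set.ext fun x => ?_⟩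
    · show v₂ x = v₁ x + (C x : ℚ)
      by_cases hCx : C x = 0
      · by_cases hCsx : C (star x) = 0
        · by_cases hvx : v₁ x = 0
          · have hvs : v₁ (star x) ≠ 0 := by
              intro h
              exact (lift_pair_ne h₁ hv₁.2.1 h) hvx
            have h2 : v₂ x = 0 := by
              have := hB₁ (star x) hvs
              rwa [star_star] at this
            rw [h2, hvx, hCx]; norm_num
          · have hv2s : v₂ (star x) = 0 := hB₁ x hvx
            have hp1 := pair_sum hv₁.2.1 x
            rw [sub_zero hv₁.1.1 hvx, add_zero] at hp1
            have hp2 := pair_sum hv₂.2.1 x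
            rw [hv2s, add_zero] at hp2
            rw [hp1, hp2, hOe x hCx hCsx, hCx]; norm_num
        · have h1 : v₁ x = 0 := by
            have hne : v₁ (star x) ≠ 0 := by
              rw [hval₁ (star x) hCsx]
              simp [Int.cast_ne_zero.mpr hCsx]
            have := sub_zero hv₁.1.1 hne
            rwa [star_star] at this
          have h2 : v₂ x = 0 := by
            have hne : v₂ (star x) ≠ 0 := by
              rw [hval₂ (star x) hCsx]
              simp [Int.cast_ne_zero.mpr hCsx]
            have := sub_zero hv₂.1.1 hne
            rwa [star_star] at this
          rw [h1, h2, hCx]; norm_num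
      · rw [hval₁ x hCx, hval₂ x hCx]; ring
    · -- supp C ⊆ supp v₁
      have hx' : C x ≠ 0 := hx
      show v₁ x ≠ 0
      rw [hval₁ x hx']
      simp [Int.cast_ne_zero.mpr hx']
    · -- supp v₁ = supp v₂
      constructor
      · intro h
        have hvs := hB₁ x h
        exact lift_pair_ne h₂ hv₂.2.1 hvs
      · intro h
        have hvs := hB₂ x h
        exact lift_pair_ne h₁ hv₁.2.1 hvs
  refine ⟨⟨fun hO => (key hO).1, fun hv => ?_⟩, fun hO => (key hO).2⟩
  funext e
  have h1 := hv₁.2.1 e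
  have h2 := hv₂.2.1 e
  have e1 := congrFun hv (Sum.inl e)
  have e2 := congrFun hv (Sum.inr e)
  simp only [Pi.add_apply] at e1 e2
  show O₂ e = O₁ e + piQ C e
  have : piQ C e = (C (Sum.inl e) : ℚ) + (C (Sum.inr e) : ℚ) := by
    simp [piQ, piZ]
  rw [this]
  linarith [h1, h2, e1, e2]

end OMPaper
end
end

section
/- Let X be a nonempty set and let ~ be a proportion structure on X. Then there exist a group G and an action of G on X that is simply transitive and such that for all a, b, c, d ∈ X: (a,b) ~ (c,d) if and only if there exists g ∈ G with g • b = a and g • d = c. -/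
universe u

/-- Every proportion structure on a nonempty set `X` arises from a simply transitive
group action: there are a group `G` and an action of `G` on `X` (given by `smul`, with
the usual action axioms) that is simply transitive and such that `(a,b) ~ (c,d)` iff
some `g ∈ G` satisfies `g • b = a` and `g • d = c`. -/
theorem statement18 {X : Type u} [Nonempty X] (r : X × X → X × X → Prop)
    (hequiv : Equivalence r)
    (h1b : ∀ a b : X, r (a, a) (b, b))
    (h1c : ∀ a b c d : X, r (a, b) (c, d) ↔ r (b, a) (d, c))
    (h1d : ∀ a b c d e f : X, r (a, b) (c, d) → r (b, e) (d, f) → r (a, e) (c, f))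
    (h2 : ∀ a b c : X, ∃! d : X, r (a, b) (c, d)) :
    ∃ (G : Type u) (_ : Group G) (smul : G → X → X),
      (∀ x : X, smul 1 x = x) ∧
      (∀ (g h : G) (x : X), smul (g * h) x = smul g (smul h x)) ∧
      (∀ x y : X, ∃! g : G, smul g x = y) ∧
      (∀ a b c d : X, r (a, b) (c, d) ↔ ∃ g : G, smul g b = a ∧ smul g d = c) := by
  classical
  obtain ⟨x0⟩ := ‹Nonempty X›
  -- the unique "fourth proportional"
  let tr : X → X → X → X := fun a b c => (h2 a b c).choose
  have tr_spec : ∀ a b c : X, r (a, b) (c, tr a b c) := fun a b c => (h2 a b c).choose_spec.1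
  have tr_uniq : ∀ a b c d : X, r (a, b) (c, d) → d = tr a b c :=
    fun a b c d h => (h2 a b c).choose_spec.2 d h
  let s : Setoid (X × X) := ⟨r, hequiv⟩
  let G := Quotient s
  have hr : ∀ p q : X × X, r p q → (Quotient.mk s p : G) = Quotient.mk s q :=
    fun p q h => Quotient.sound h
  -- multiplication data on representatives
  -- [a,b] * [c,d] = [tr b a c, d]  since r (b,a) (c, tr b a c), i.e. r (a,b) (tr b a c, c)
  have mulCompat : ∀ p p' q q' : X × X, r p p' → r q q' →
      r (tr p.2 p.1 q.1, q.2) (tr p'.2 p'.1 q'.1, q'.2) := by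
    rintro ⟨a, b⟩ ⟨a', b'⟩ ⟨c, d⟩ ⟨c', d'⟩ hp hq
    have he : r (a, b) (tr b a c, c) := (h1c a b (tr b a c) c).mpr (tr_spec b a c)
    have he' : r (a', b') (tr b' a' c', c') := (h1c a' b' (tr b' a' c') c').mpr (tr_spec b' a' c')
    have hec : r (tr b a c, c) (tr b' a' c', c') :=
      hequiv.trans (hequiv.trans (hequiv.symm he) hp) he'
    exact h1d _ _ _ _ _ _ hec hq
  let mulfn : G → G → G := Quotient.map₂ (fun p q => (tr p.2 p.1 q.1, q.2)) (fun p p' hp q q' hq => mulCompat p p' q q' hp hq)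
  have invCompat : ∀ p p' : X × X, r p p' → r (p.2, p.1) (p'.2, p'.1) := by
    rintro ⟨a, b⟩ ⟨a', b'⟩ hp
    exact (h1c a b a' b').mp hp
  let invfn : G → G := Quotient.map (fun p => (p.2, p.1)) invCompat
  let onee : G := Quotient.mk s (x0, x0)
  -- key combinational identity (used for assoc and for smul compatibility)
  have key : ∀ a b c d e : X, tr d (tr b a c) e = tr b a (tr d c e) := by
    intro a b c d e
    set g := tr b a c with hg
    set k := tr d c e with hk
    set m := tr b a k with hm
    have hgc : r (a, b) (g, c) := (h1c a b g c).mpr (tr_spec b a c)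
    have hke : r (c, d) (k, e) := (h1c c d k e).mpr (tr_spec d c e)
    have hmk : r (a, b) (m, k) := (h1c a b m k).mpr (tr_spec b a k)
    have h5 : r (g, c) (m, k) := hequiv.trans (hequiv.symm hgc) hmk
    have h6 : r (g, d) (m, e) := h1d g c m k d e h5 hke
    have h7 : r (d, g) (e, m) := (h1c g d m e).mp h6
    exact (tr_uniq d g e m h7).symm
  have assoc : ∀ g h k : G, mulfn (mulfn g h) k = mulfn g (mulfn h k) := by
    intro g h k
    induction g using Quotient.inductionOn with | h p =>
    induction h using Quotient.inductionOn with | h q =>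
    induction k using Quotient.inductionOn with | h w =>
    obtain ⟨a, b⟩ := p; obtain ⟨c, d⟩ := q; obtain ⟨e, f⟩ := w
    show Quotient.mk s (tr d (tr b a c) e, f) = Quotient.mk s (tr b a (tr d c e), f)
    rw [key]
  have one_mul' : ∀ g : G, mulfn onee g = g := by
    intro g
    induction g using Quotient.inductionOn with | h p =>
    obtain ⟨c, d⟩ := p
    show Quotient.mk s (tr x0 x0 c, d) = Quotient.mk s (c, d)
    rw [← tr_uniq x0 x0 c c (h1b x0 c)]
  have inv_mul' : ∀ g : G, mulfn (invfn g) g = onee := by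
    intro g
    induction g using Quotient.inductionOn with | h p =>
    obtain ⟨a, b⟩ := p
    show Quotient.mk s (tr a b a, b) = Quotient.mk s (x0, x0)
    rw [← tr_uniq a b a b (hequiv.refl (a, b))]
    exact Quotient.sound (h1b b x0)
  letI : Mul G := ⟨mulfn⟩
  letI : One G := ⟨onee⟩
  letI : Inv G := ⟨invfn⟩
  letI grp : Group G := Group.ofLeftAxioms assoc one_mul' inv_mul'
  -- the action : [a,b] • x = tr b a x  (the unique y with r (b,a) (x,y), i.e. r (a,b) (y,x))
  have smulCompat : ∀ p p' : X × X, r p p' → ∀ x : X, tr p.2 p.1 x = tr p'.2 p'.1 x := by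
    rintro ⟨a, b⟩ ⟨a', b'⟩ hp x
    have hba : r (b, a) (b', a') := (h1c a b a' b').mp hp
    have : r (b', a') (x, tr b a x) :=
      hequiv.symm (hequiv.trans (hequiv.symm (tr_spec b a x)) hba)
    exact tr_uniq b' a' x (tr b a x) this
  let smul : G → X → X := fun g x =>
    Quotient.liftOn g (fun p => tr p.2 p.1 x) (fun p p' h => smulCompat p p' h x)
  refine ⟨G, grp, smul, ?_, ?_, ?_, ?_⟩
  · intro x
    show tr x0 x0 x = x
    exact (tr_uniq x0 x0 x x (h1b x0 x)).symm
  · intro g h x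
    induction g using Quotient.inductionOn with | h p =>
    induction h using Quotient.inductionOn with | h q =>
    obtain ⟨a, b⟩ := p; obtain ⟨c, d⟩ := q
    show tr d (tr b a c) x = tr b a (tr d c x)
    exact key a b c d x
  · intro x y
    refine ⟨Quotient.mk s (y, x), ?_, ?_⟩
    · show tr x y x = y
      exact (tr_uniq x y x y (hequiv.refl (x, y))).symm
    · intro g hg
      induction g using Quotient.inductionOn with | h p =>
      obtain ⟨a, b⟩ := p
      have hy : tr b a x = y := hg
      have : r (b, a) (x, y) := hy ▸ tr_spec b a x
      exact Quotient.sound ((h1c b a x y).mp this)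
  · intro a b c d
    constructor
    · intro h
      refine ⟨Quotient.mk s (a, b), ?_, ?_⟩
      · show tr b a b = a
        exact (tr_uniq b a b a (hequiv.refl (b, a))).symm
      · show tr b a d = c
        exact (tr_uniq b a d c ((h1c a b c d).mp h)).symm
    · rintro ⟨g, hgb, hgd⟩
      induction g using Quotient.inductionOn with | h p =>
      obtain ⟨p1, p2⟩ := p
      have h1 : tr p2 p1 b = a := hgb
      have h2' : tr p2 p1 d = c := hgd
      have hb : r (p2, p1) (b, a) := h1 ▸ tr_spec p2 p1 b
      have hd : r (p2, p1) (d, c) := h2' ▸ tr_spec p2 p1 d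
      have hab : r (p1, p2) (a, b) := (h1c p2 p1 b a).mp hb
      have hcd : r (p1, p2) (c, d) := (h1c p2 p1 d c).mp hd
      exact hequiv.trans (hequiv.symm hab) hcd
end

section
/- Let X be a nonempty set and let ~ be an equivalence relation on X × X satisfying: (a,a) ~ (b,b) for all a, b ∈ X; if (a,b) ~ (c,d) and (b,e) ~ (d,f) then (a,e) ~ (c,f); and for all a, b, d ∈ X there is a unique c ∈ X with (a,b) ~ (c,d). Then for all a, b, c, d ∈ X, (a,b) ~ (c,d) implies (b,a) ~ (d,c). -/
/-- Axiom (PS1c) is redundant: if `~` is an equivalence relation on `X × X` satisfying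
(PS1b), (PS1d) and (PS2'), then `(a,b) ~ (c,d)` implies `(b,a) ~ (d,c)`. -/
theorem statement19 {X : Type*} [Nonempty X] (r : X × X → X × X → Prop)
    (hequiv : Equivalence r)
    (h1b : ∀ a b : X, r (a, a) (b, b))
    (h1d : ∀ a b c d e f : X, r (a, b) (c, d) → r (b, e) (d, f) → r (a, e) (c, f))
    (h2 : ∀ a b d : X, ∃! c : X, r (a, b) (c, d)) :
    ∀ a b c d : X, r (a, b) (c, d) → r (b, a) (d, c) := by
  intro a b c d hab
  obtain ⟨e, he, _⟩ := h2 b a c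
  have hbb : r (b, b) (e, d) := h1d b a e c b d he hab
  obtain ⟨u, hu, huniq⟩ := h2 b b d
  have h1 : e = u := huniq e hbb
  have h2' : d = u := huniq d (h1b b d)
  rw [h1.trans h2'.symm] at he
  exact he
end
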